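/- arXiv:1912.01798 — 2 statements merged into one kernel-verified Lean document; each statement's English description precedes it below -/
import Mathlib

section
/- In the symmetric block-withholding game with m_1 = m_2 = m ∈ (0, 1/2], the common revenue along the diagonal, g(x) = (m² + m x − 2x²)/((1 − 2x)(m² + 2 m x)) for x ∈ [0, m) with 2x < 1, satisfies g(0) = 1 and g(x) < 1 for all x ∈ (0, m) with 2x < 1 and m < 1/2. That is, mutual infiltration at equal rates strictly reduces both pools' revenue below the no-attack level (the miner's dilemma). -/
/-- Common diagonal revenue in the symmetric block-withholding game. -/
noncomputable def g (m x : ℝ) : ℝ :=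
  (m ^ 2 + m * x - 2 * x ^ 2) / ((1 - 2 * x) * (m ^ 2 + 2 * m * x))

theorem g_zero {m : ℝ} (hm : m ≠ 0) : g m 0 = 1 := by
  simp [g, hm]

theorem denom_sub_num_eq (m x : ℝ) :
    (1 - 2 * x) * (m ^ 2 + 2 * m * x) - (m ^ 2 + m * x - 2 * x ^ 2) =
      x * (1 - 2 * m) * (m + 2 * x) := by
  ring

theorem g_lt_one {m x : ℝ} (hm : 0 < m) (hm2 : m < 1 / 2) (hx : 0 < x) (h2x : 2 * x < 1) :
    g m x < 1 := by
  have hden : 0 < (1 - 2 * x) * (m ^ 2 + 2 * m * x) := mul_pos (by linarith) (by positivity)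
  have hgap : 0 < x * (1 - 2 * m) * (m + 2 * x) :=
    mul_pos (mul_pos hx (by linarith)) (by linarith)
  rw [g, div_lt_one hden]
  linarith [denom_sub_num_eq m x]

theorem stmt_9_general (m : ℝ) (hm : 0 < m) :
    g m 0 = 1 ∧
    ∀ x : ℝ, 0 < x → x < m → 2 * x < 1 → m < 1 / 2 → g m x < 1 :=
  ⟨g_zero hm.ne', fun _ hx _ h2x hm2 => g_lt_one hm hm2 hx h2x⟩

theorem stmt_9 (m : ℝ) (hm : 0 < m) (hm' : m ≤ 1 / 2) :
    g m 0 = 1 ∧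
    ∀ x : ℝ, 0 < x → x < m → 2 * x < 1 → m < 1 / 2 → g m x < 1 :=
  stmt_9_general m hm
end

section
/- In the SM1 selfish mining model with follower fraction γ = 0 and attacker hash power α ∈ (0, 1/2), the attacker's relative revenue is R(α) = (α(1−α)²(4α + γ(1−2α)) − α³)/(1 − α(1 + (2−α)α)) evaluated at γ = 0, i.e. R(α) = (4α²(1−α)² − α³)/(1 − α(1 + (2−α)α)). Prove that R(α) > α if and only if α > 1/3, i.e. the SM1 profitability threshold at γ = 0 is exactly 1/3. -/
theorem stmt_11 (α : ℝ) (hα0 : 0 < α) (hα : α < 1 / 2) :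
    (4 * α ^ 2 * (1 - α) ^ 2 - α ^ 3) / (1 - α * (1 + (2 - α) * α)) > α ↔ α > 1 / 3 := by
  have hd : 0 < 1 - α * (1 + (2 - α) * α) := by nlinarith [sq_nonneg α, sq_nonneg (1 - 2*α)]
  have hsq : (0:ℝ) < (α - 1)^2 := by nlinarith [mul_pos (show (0:ℝ)<1-α by linarith) (show (0:ℝ)<1-α by linarith)]
  rw [gt_iff_lt, lt_div_iff₀ hd]
  have key : 4 * α ^ 2 * (1 - α) ^ 2 - α ^ 3 - α * (1 - α * (1 + (2 - α) * α))
      = α * (α - 1)^2 * (3*α - 1) := by ring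
  constructor
  · intro h
    have : 0 < α * (α - 1)^2 * (3*α - 1) := by linarith
    nlinarith [mul_pos hα0 hsq]
  · intro h
    nlinarith [mul_pos (mul_pos hα0 hsq) (by linarith : (0:ℝ) < 3*α - 1)]
end
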